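/- arXiv:1709.00625 — 2 statements merged into one kernel-verified Lean document; each statement's English description precedes it below -/
import Mathlib

section
/- In the bicameral game with parameters (m_s, m_r, q_s, q_r), where m_s < m_r, m_s is odd, m_r is even, and the quotas are simple majorities (q_s = ⌈(m_s+1)/2⌉ and q_r = ⌈(m_r+1)/2⌉): if m_r < 2·m_s, then c_s(q_s + q_r) < c_r(q_s + q_r); and if m_r = 2·m_s, then c_s(q_s + q_r) = c_r(q_s + q_r). -/
/-!
In a coalition of size `qs + qr` a player is critical exactly when the coalition has `qs`
senators and `qr` representatives, so `c_s = C(ms-1, qs-1) C(mr, qr)` and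
`c_r = C(ms, qs) C(mr-1, qr-1)`. The identity `n C(n-1, k-1) = k C(n, k)` then gives
`ms qr c_s = mr qs c_r`. With `ms = 2a+1`, `qs = a+1`, `mr = 2b`, `qr = b+1` this reads
`(2a+1)(b+1) c_s = 2b(a+1) c_r`, and `(2a+1)(b+1) - 2b(a+1) = 2a+1-b = ms - mr/2`.
-/

/-- A coalition in the bicameral game with `ms` senators (the left summands) and `mr`
representatives (the right summands) is winning iff it contains at least `qs` senators
and at least `qr` representatives. -/
def bicamWinning (ms mr qs qr : ℕ) (S : Finset (Fin ms ⊕ Fin mr)) : Prop :=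
  qs ≤ (S.filter (fun p => p.isLeft)).card ∧ qr ≤ (S.filter (fun p => p.isRight)).card

/-- The number of coalitions of size `k` in which player `i` is critical in the
bicameral game with parameters `(ms, mr, qs, qr)`. -/
noncomputable def bicamCrit (ms mr qs qr : ℕ) (i : Fin ms ⊕ Fin mr) (k : ℕ) : ℕ :=
  Set.ncard {S : Finset (Fin ms ⊕ Fin mr) |
    S.card = k ∧ i ∈ S ∧ bicamWinning ms mr qs qr S ∧
      ¬ bicamWinning ms mr qs qr (S.erase i)}

open Finset

namespace Finset

variable {α β : Type*}

lemma filter_isLeft_eq_map_toLeft (u : Finset (α ⊕ β)) :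
    u.filter (·.isLeft) = u.toLeft.map .inl := by
  ext (a | b) <;> simp

lemma filter_isRight_eq_map_toRight (u : Finset (α ⊕ β)) :
    u.filter (·.isRight) = u.toRight.map .inr := by
  ext (a | b) <;> simp

lemma ncard_setOf_toLeft_toRight (P : Finset α → Prop) (Q : Finset β → Prop) :
    {u : Finset (α ⊕ β) | P u.toLeft ∧ Q u.toRight}.ncard =
      {s | P s}.ncard * {t | Q t}.ncard := by
  rw [← Set.ncard_prod, ← Set.ncard_preimage_of_injective_subset_range sumEquiv.injective
    (by simp [sumEquiv.surjective.range_eq])]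
  rfl

variable [Fintype α]

lemma ncard_setOf_card_eq (k : ℕ) :
    {s : Finset α | #s = k}.ncard = (Fintype.card α).choose k := by
  classical
  rw [← card_univ, ← card_powersetCard, ← Set.ncard_coe_finset]
  congr 1
  ext s
  simp

lemma ncard_setOf_mem_card_eq (a : α) {k : ℕ} (hk : 1 ≤ k) :
    {s : Finset α | a ∈ s ∧ #s = k}.ncard = (Fintype.card α - 1).choose (k - 1) := by
  classical
  have hcount := card_filter_powersetCard_subset {a} univ k (subset_univ _) (by simpa)
  rw [card_singleton, card_univ] at hcount
  rw [← hcount, ← Set.ncard_coe_finset]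
  congr 1
  ext s
  simp [and_comm]

end Finset

lemma Nat.mul_choose_sub_one_sub_one (n : ℕ) {k : ℕ} (hk : 1 ≤ k) :
    n * (n - 1).choose (k - 1) = k * n.choose k := by
  obtain ⟨k, rfl⟩ := Nat.exists_eq_add_of_le' hk
  rcases n with _ | n
  · simp
  · simpa [mul_comm] using Nat.add_one_mul_choose_eq n k

section Bicameral

variable {ms mr qs qr : ℕ}

lemma bicamWinning_iff (S : Finset (Fin ms ⊕ Fin mr)) :
    bicamWinning ms mr qs qr S ↔ qs ≤ #S.toLeft ∧ qr ≤ #S.toRight := by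
  rw [bicamWinning, filter_isLeft_eq_map_toLeft, filter_isRight_eq_map_toRight, card_map,
    card_map]

/-- A winning coalition of size `qs + qr` meets both quotas exactly, so each of its members is
critical. -/
lemma bicamCrit_quota_sum (i : Fin ms ⊕ Fin mr) :
    bicamCrit ms mr qs qr i (qs + qr) =
      {S : Finset (Fin ms ⊕ Fin mr) | i ∈ S ∧ #S.toLeft = qs ∧ #S.toRight = qr}.ncard := by
  rw [bicamCrit]
  congr 1
  ext S
  simp only [Set.mem_ofPred_eq, bicamWinning_iff]
  have hS := card_toLeft_add_card_toRight (u := S)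
  have hSi := card_toLeft_add_card_toRight (u := S.erase i)
  constructor
  · rintro ⟨hcard, hi, ⟨hl, hr⟩, -⟩
    exact ⟨hi, by omega, by omega⟩
  · rintro ⟨hi, hl, hr⟩
    have := card_erase_add_one hi
    exact ⟨by omega, hi, ⟨hl.ge, hr.ge⟩, fun ⟨hl', hr'⟩ => by omega⟩

lemma bicamCrit_inl_quota_sum (hqs : 1 ≤ qs) (s : Fin ms) :
    bicamCrit ms mr qs qr (.inl s) (qs + qr) = (ms - 1).choose (qs - 1) * mr.choose qr := by
  have hcount := ncard_setOf_toLeft_toRight (fun A : Finset (Fin ms) => s ∈ A ∧ #A = qs)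
    (fun B : Finset (Fin mr) => #B = qr)
  simp only [ncard_setOf_mem_card_eq s hqs, ncard_setOf_card_eq, Fintype.card_fin] at hcount
  rw [bicamCrit_quota_sum, ← hcount]
  simp only [mem_toLeft, and_assoc]

lemma bicamCrit_inr_quota_sum (hqr : 1 ≤ qr) (r : Fin mr) :
    bicamCrit ms mr qs qr (.inr r) (qs + qr) = ms.choose qs * (mr - 1).choose (qr - 1) := by
  have hcount := ncard_setOf_toLeft_toRight (fun A : Finset (Fin ms) => #A = qs)
    (fun B : Finset (Fin mr) => r ∈ B ∧ #B = qr)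
  simp only [ncard_setOf_mem_card_eq r hqr, ncard_setOf_card_eq, Fintype.card_fin] at hcount
  rw [bicamCrit_quota_sum, ← hcount]
  simp only [mem_toRight, and_left_comm]

lemma bicamCrit_inl_mul_eq_inr_mul (hqs : 1 ≤ qs) (hqr : 1 ≤ qr) (s : Fin ms) (r : Fin mr) :
    ms * qr * bicamCrit ms mr qs qr (.inl s) (qs + qr) =
      mr * qs * bicamCrit ms mr qs qr (.inr r) (qs + qr) := by
  rw [bicamCrit_inl_quota_sum hqs, bicamCrit_inr_quota_sum hqr]
  calc ms * qr * ((ms - 1).choose (qs - 1) * mr.choose qr)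
      = (ms * (ms - 1).choose (qs - 1)) * (qr * mr.choose qr) := by ring
    _ = (qs * ms.choose qs) * (mr * (mr - 1).choose (qr - 1)) := by
      rw [Nat.mul_choose_sub_one_sub_one ms hqs, Nat.mul_choose_sub_one_sub_one mr hqr]
    _ = mr * qs * (ms.choose qs * (mr - 1).choose (qr - 1)) := by ring

lemma bicamCrit_inr_quota_sum_pos (hqs : qs ≤ ms) (hqr₀ : 1 ≤ qr) (hqr : qr ≤ mr)
    (r : Fin mr) : 0 < bicamCrit ms mr qs qr (.inr r) (qs + qr) := by
  rw [bicamCrit_inr_quota_sum hqr₀]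
  exact Nat.mul_pos (Nat.choose_pos hqs) (Nat.choose_pos (by omega))

end Bicameral

/-- The exceptional case: `ms` odd, `mr` even, `ms < mr`, simple-majority quotas.
For minimal winning coalitions (size `qs + qr`): if `mr < 2 * ms`, the representative's
critical number is strictly larger; if `mr = 2 * ms`, they are equal. -/
theorem bicam_exceptional_minimal_coalitions (ms mr qs qr : ℕ)
    (hsize : ms < mr) (hodd : Odd ms) (heven : Even mr)
    (hqs : qs = ms / 2 + 1) (hqr : qr = mr / 2 + 1)
    (s : Fin ms) (r : Fin mr) :
    (mr < 2 * ms →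
      bicamCrit ms mr qs qr (Sum.inl s) (qs + qr) <
        bicamCrit ms mr qs qr (Sum.inr r) (qs + qr)) ∧
    (mr = 2 * ms →
      bicamCrit ms mr qs qr (Sum.inl s) (qs + qr) =
        bicamCrit ms mr qs qr (Sum.inr r) (qs + qr)) := by
  obtain ⟨a, rfl⟩ := hodd
  obtain ⟨b, rfl⟩ := heven
  obtain rfl : qs = a + 1 := by omega
  obtain rfl : qr = b + 1 := by omega
  set cs := bicamCrit (2 * a + 1) (b + b) (a + 1) (b + 1) (.inl s) (a + 1 + (b + 1))
  set cr := bicamCrit (2 * a + 1) (b + b) (a + 1) (b + 1) (.inr r) (a + 1 + (b + 1))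
  have hratio : (2 * a + 1) * (b + 1) * cs = (b + b) * (a + 1) * cr :=
    bicamCrit_inl_mul_eq_inr_mul (by omega) (by omega) s r
  have hpos : 0 < cr := bicamCrit_inr_quota_sum_pos (by omega) (by omega) (by omega) r
  refine ⟨fun hlt => ?_, fun heq => ?_⟩
  · refine Nat.lt_of_mul_lt_mul_left (a := (2 * a + 1) * (b + 1)) ?_
    calc (2 * a + 1) * (b + 1) * cs = (b + b) * (a + 1) * cr := hratio
      _ < (2 * a + 1) * (b + 1) * cr := Nat.mul_lt_mul_of_pos_right (by nlinarith) hpos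
  · obtain rfl : b = 2 * a + 1 := by omega
    refine Nat.eq_of_mul_eq_mul_left (by positivity : 0 < (2 * a + 1) * (2 * a + 1 + 1)) ?_
    rw [hratio]
    ring
end

section
/- In the US legislative game, let Φ be either the Banzhaf power index (weighting vector λ_k = 1/2^536 for all k) or the Shapley–Shubik power index (weighting vector λ_k = 1/(537 · C(536, k−1))). Then for any senator S and any representative R: Φ(P) > Φ(S) > Φ(V) > Φ(R). -/
/-- The players of the US legislative game: the president, the vice president,
100 senators, and 435 representatives. -/
inductive USPlayer where
  | pres : USPlayer
  | vp : USPlayer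
  | sen : Fin 100 → USPlayer
  | rep : Fin 435 → USPlayer
  deriving DecidableEq

/-- Whether a player is a senator. -/
def USPlayer.isSen : USPlayer → Bool
  | .sen _ => true
  | _ => false

/-- Whether a player is a representative. -/
def USPlayer.isRep : USPlayer → Bool
  | .rep _ => true
  | _ => false

/-- The number of senators in a coalition. -/
def numSen (S : Finset USPlayer) : ℕ := (S.filter (fun p => p.isSen)).card

/-- The number of representatives in a coalition. -/
def numRep (S : Finset USPlayer) : ℕ := (S.filter (fun p => p.isRep)).card

/-- A coalition is winning in the US legislative game iff either the president is in it
together with at least 218 representatives and either at least 51 senators or the vice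
president and at least 50 senators; or it contains at least 67 senators and at least
290 representatives (veto override). -/
def usWinning (S : Finset USPlayer) : Prop :=
  (USPlayer.pres ∈ S ∧ 218 ≤ numRep S ∧
    (51 ≤ numSen S ∨ (USPlayer.vp ∈ S ∧ 50 ≤ numSen S))) ∨
  (67 ≤ numSen S ∧ 290 ≤ numRep S)

/-- The number of coalitions of size `k` in which player `i` is critical in the US
legislative game. -/
noncomputable def usCrit (i : USPlayer) (k : ℕ) : ℕ :=
  Set.ncard {S : Finset USPlayer |
    S.card = k ∧ i ∈ S ∧ usWinning S ∧ ¬ usWinning (S.erase i)}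
/-- The power of player `i` under the power index with weighting vector `lam` on the
537-player US legislative game. -/
noncomputable def usPower (lam : ℕ → ℝ) (i : USPlayer) : ℝ :=
  ∑ k ∈ Finset.Icc 1 537, lam k * (usCrit i k : ℝ)

/-!
The president is at least as desirable as any senator, and any senator at least as desirable as
the vice president: replacing the weaker player by the stronger one in a coalition never turns it
from winning to losing. Hence the transposition of the two players maps the coalitions of size `k`
in which the weaker one is critical injectively into those in which the stronger one is critical,
and an explicit critical coalition outside the image (of size 270, resp. 357) makes one of these
inequalities strict. As both indices have positive weights, this orders P, S and V.

The vice president and a representative are not comparable in this sense, so there we count.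
V is critical exactly in the coalitions made of P, V, 50 senators and at least 218
representatives. A representative is critical only if the coalition has exactly 218
representatives, P and a Senate majority (V breaking a 50–50 tie), or exactly 290
representatives, no P and at least 67 senators. Counting coalitions by these profiles gives an
exact binomial formula for V and a binomial upper bound for a representative, and the two
weighted totals are compared by evaluation.
-/

open Finset
open scoped Nat

section SwapMap

variable {α : Type*} [DecidableEq α] {i j : α} {S : Finset α}

theorem Finset.map_swap_of_notMem_of_mem (hi : i ∉ S) (hj : j ∈ S) :
    S.map (Equiv.swap i j).toEmbedding = insert i (S.erase j) := by
  ext x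
  rw [mem_map_equiv, Equiv.symm_swap, mem_insert, mem_erase]
  rcases eq_or_ne x i with rfl | hxi
  · simpa using hj
  rcases eq_or_ne x j with rfl | hxj
  · simp [hi, hxi]
  · simp [Equiv.swap_apply_of_ne_of_ne hxi hxj, hxi, hxj]

theorem Finset.map_swap_of_iff (h : i ∈ S ↔ j ∈ S) :
    S.map (Equiv.swap i j).toEmbedding = S := by
  ext x
  rw [mem_map_equiv, Equiv.symm_swap]
  rcases eq_or_ne x i with rfl | hxi
  · simpa using h.symm
  rcases eq_or_ne x j with rfl | hxj
  · simpa using h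
  · rw [Equiv.swap_apply_of_ne_of_ne hxi hxj]

@[simp]
theorem Finset.map_map_swap (i j : α) (S : Finset α) :
    (S.map (Equiv.swap i j).toEmbedding).map (Equiv.swap i j).toEmbedding = S := by
  ext x
  simp [mem_map_equiv]

end SwapMap

section SimpleGame

variable {α : Type*} [DecidableEq α] (W : Finset α → Prop)

noncomputable def critCount (i : α) (k : ℕ) : ℕ :=
  {S : Finset α | S.card = k ∧ i ∈ S ∧ W S ∧ ¬ W (S.erase i)}.ncard

def AtLeastAsDesirable (i j : α) : Prop :=
  ∀ T : Finset α, i ∉ T → j ∉ T → W (insert j T) → W (insert i T)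

variable {W} {i j : α}

theorem AtLeastAsDesirable.map_swap (h : AtLeastAsDesirable W i j) {S : Finset α}
    (hS : i ∈ S → j ∈ S) (hW : W S) : W (S.map (Equiv.swap i j).toEmbedding) := by
  by_cases hi : i ∈ S
  · rwa [map_swap_of_iff (iff_of_true hi (hS hi))]
  by_cases hj : j ∈ S
  · rw [map_swap_of_notMem_of_mem hi hj]
    exact h _ (fun h' => hi (mem_of_mem_erase h')) (notMem_erase j S) (by rwa [insert_erase hj])
  · rwa [map_swap_of_iff (iff_of_false hi hj)]

theorem AtLeastAsDesirable.map_swap_critical (h : AtLeastAsDesirable W i j) {S : Finset α}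
    (hS : j ∈ S ∧ W S ∧ ¬ W (S.erase j)) :
    i ∈ S.map (Equiv.swap i j).toEmbedding ∧ W (S.map (Equiv.swap i j).toEmbedding) ∧
      ¬ W ((S.map (Equiv.swap i j).toEmbedding).erase i) := by
  obtain ⟨hj, hW, hlose⟩ := hS
  refine ⟨by simpa [mem_map_equiv] using hj, h.map_swap (fun _ => hj) hW, fun hW' => hlose ?_⟩
  have herase : (S.map (Equiv.swap i j).toEmbedding).erase i
      = (S.erase j).map (Equiv.swap i j).toEmbedding := by
    simp [map_erase]
  rw [herase] at hW'
  simpa using h.map_swap (fun hi => by simp [mem_map_equiv] at hi) hW'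

variable [Fintype α]

theorem AtLeastAsDesirable.critCount_le (h : AtLeastAsDesirable W i j) (k : ℕ) :
    critCount W j k ≤ critCount W i k :=
  Set.ncard_le_ncard_of_injOn (fun S => S.map (Equiv.swap i j).toEmbedding)
    (fun S ⟨hk, hS⟩ => ⟨by simpa using hk, h.map_swap_critical hS⟩)
    (map_injective _).injOn

theorem AtLeastAsDesirable.critCount_lt (h : AtLeastAsDesirable W i j) {T : Finset α}
    (hT : i ∈ T ∧ W T ∧ ¬ W (T.erase i)) (hjT : j ∉ T) (hswap : ¬ W (insert j (T.erase i))) :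
    critCount W j T.card < critCount W i T.card := by
  set σ := (Equiv.swap i j).toEmbedding
  have hD : ∀ S ∈ {S : Finset α | S.card = T.card ∧ j ∈ S ∧ W S ∧ ¬ W (S.erase j)},
      S.map σ ∈ {S : Finset α | S.card = T.card ∧ i ∈ S ∧ W S ∧ ¬ W (S.erase i)} :=
    fun S ⟨hk, hS⟩ => ⟨by simpa using hk, h.map_swap_critical hS⟩
  rw [critCount, critCount, ← Set.ncard_image_of_injective _ (map_injective σ)]
  refine Set.ncard_lt_ncard ⟨Set.image_subset_iff.2 hD, fun hsub => ?_⟩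
  obtain ⟨S, ⟨-, -, hWS, -⟩, hST⟩ := hsub ⟨rfl, hT⟩
  have : S = insert j (T.erase i) := by
    rw [← map_map_swap i j S, hST, Equiv.swap_comm,
      map_swap_of_notMem_of_mem hjT hT.1]
  exact hswap (this ▸ hWS)

theorem critCount_eq_card [DecidablePred W] (i : α) (k : ℕ) :
    critCount W i k = #{S | #S = k ∧ i ∈ S ∧ W S ∧ ¬ W (S.erase i)} := by
  rw [critCount, ← Set.ncard_coe_finset]
  simp

end SimpleGame

section Counting

variable {α : Type*} [Fintype α]

theorem card_filter_card_eq_and_le (a m : ℕ) :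
    #{A : Finset α | #A = a ∧ m ≤ #A} = if m ≤ a then (Fintype.card α).choose a else 0 := by
  split_ifs with h
  · rw [filter_congr fun A _ => and_iff_left_of_imp fun hA => hA ▸ h]
    simp
  · rw [card_eq_zero, filter_eq_empty_iff]
    rintro A - ⟨rfl, hm⟩
    exact h hm

theorem card_filter_card_eq_and_mem [DecidableEq α] (b : ℕ) (x : α) :
    #{B : Finset α | #B = b + 1 ∧ x ∈ B} = (Fintype.card α - 1).choose b := by
  have := card_filter_powersetCard_subset {x} univ (b + 1) (subset_univ _) (by simp)
  rw [card_univ, card_singleton, add_tsub_cancel_right] at this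
  rw [← this, powersetCard_eq_filter, powerset_univ, filter_filter]
  simp

end Counting

namespace USPlayer

def equivSum : (Unit ⊕ Unit) ⊕ (Fin 100 ⊕ Fin 435) ≃ USPlayer where
  toFun
    | .inl (.inl _) => pres
    | .inl (.inr _) => vp
    | .inr (.inl j) => sen j
    | .inr (.inr j) => rep j
  invFun
    | pres => .inl (.inl ())
    | vp => .inl (.inr ())
    | sen j => .inr (.inl j)
    | rep j => .inr (.inr j)
  left_inv := by rintro ((_ | _) | (_ | _)) <;> rfl
  right_inv := by rintro (_ | _ | _ | _) <;> rfl

instance : Fintype USPlayer := Fintype.ofEquiv _ equivSum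

theorem sen_injective : Function.Injective sen := fun _ _ h => by injection h

theorem rep_injective : Function.Injective rep := fun _ _ h => by injection h

theorem isSen_eq_false {x : USPlayer} (hx : ∀ j, x ≠ sen j) : x.isSen = false := by
  cases x <;> simp_all [isSen]

theorem isRep_eq_false {x : USPlayer} (hx : ∀ j, x ≠ rep j) : x.isRep = false := by
  cases x <;> simp_all [isRep]

def inProfile (p v : Bool) (A : Finset (Fin 100)) (B : Finset (Fin 435)) : USPlayer → Bool
  | pres => p
  | vp => v
  | sen j => j ∈ A
  | rep j => j ∈ B

end USPlayer

open USPlayer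

noncomputable def senSet (S : Finset USPlayer) : Finset (Fin 100) :=
  S.preimage sen sen_injective.injOn

noncomputable def repSet (S : Finset USPlayer) : Finset (Fin 435) :=
  S.preimage rep rep_injective.injOn

@[simp] theorem card_senSet (S : Finset USPlayer) : #(senSet S) = numSen S := by
  rw [senSet, card_preimage, numSen]
  congr 1
  apply filter_congr
  rintro (_ | _ | _ | _) _ <;> simp [isSen]

@[simp] theorem card_repSet (S : Finset USPlayer) : #(repSet S) = numRep S := by
  rw [repSet, card_preimage, numRep]
  congr 1
  apply filter_congr
  rintro (_ | _ | _ | _) _ <;> simp [isRep]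

theorem card_eq_numSen_add_numRep (S : Finset USPlayer) :
    #S = (if pres ∈ S then 1 else 0) + (if vp ∈ S then 1 else 0) + numSen S + numRep S := by
  simp only [numSen, numRep, card_filter, card_eq_sum_ones S, ← sum_ite_eq' S pres (fun _ => 1),
    ← sum_ite_eq' S vp (fun _ => 1), ← sum_add_distrib]
  refine sum_congr rfl ?_
  rintro (_ | _ | _ | _) _ <;> simp [isSen, isRep]

def coalition (p v : Bool) (A : Finset (Fin 100)) (B : Finset (Fin 435)) : Finset USPlayer :=
  {x | x.inProfile p v A B}

@[simp] theorem pres_mem_coalition {p v A B} : pres ∈ coalition p v A B ↔ p = true := by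
  simp only [coalition, mem_filter, mem_univ, true_and]; simp [inProfile]
@[simp] theorem vp_mem_coalition {p v A B} : vp ∈ coalition p v A B ↔ v = true := by
  simp only [coalition, mem_filter, mem_univ, true_and]; simp [inProfile]
@[simp] theorem sen_mem_coalition {p v A B j} : sen j ∈ coalition p v A B ↔ j ∈ A := by
  simp only [coalition, mem_filter, mem_univ, true_and]; simp [inProfile]
@[simp] theorem rep_mem_coalition {p v A B j} : rep j ∈ coalition p v A B ↔ j ∈ B := by
  simp only [coalition, mem_filter, mem_univ, true_and]; simp [inProfile]

@[simp] theorem mem_senSet {S : Finset USPlayer} {j : Fin 100} : j ∈ senSet S ↔ sen j ∈ S := by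
  simp [senSet]
@[simp] theorem mem_repSet {S : Finset USPlayer} {j : Fin 435} : j ∈ repSet S ↔ rep j ∈ S := by
  simp [repSet]

@[simp] theorem senSet_coalition {p v A B} : senSet (coalition p v A B) = A := by ext; simp
@[simp] theorem repSet_coalition {p v A B} : repSet (coalition p v A B) = B := by ext; simp

theorem coalition_eq_self {S : Finset USPlayer} {p v : Bool} (hp : pres ∈ S ↔ p = true)
    (hv : vp ∈ S ↔ v = true) : coalition p v (senSet S) (repSet S) = S := by
  ext (_ | _ | _ | _) <;> simp [hp, hv]

noncomputable def profileSet (p v : Bool) (𝒜 : Finset (Finset (Fin 100)))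
    (ℬ : Finset (Finset (Fin 435))) : Finset (Finset USPlayer) :=
  {S | (pres ∈ S ↔ p = true) ∧ (vp ∈ S ↔ v = true) ∧ senSet S ∈ 𝒜 ∧ repSet S ∈ ℬ}

theorem card_profileSet (p v : Bool) (𝒜 : Finset (Finset (Fin 100)))
    (ℬ : Finset (Finset (Fin 435))) : #(profileSet p v 𝒜 ℬ) = #𝒜 * #ℬ := by
  rw [← card_product]
  refine card_nbij' (fun S => (senSet S, repSet S)) (fun AB => coalition p v AB.1 AB.2)
    ?_ ?_ ?_ ?_
  · intro S hS
    simp_all [profileSet]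
  · rintro ⟨A, B⟩ hAB
    simp_all [profileSet]
  · intro S hS
    obtain ⟨-, hp, hv, -⟩ := mem_filter.1 (mem_coe.1 hS)
    exact coalition_eq_self hp hv
  · rintro ⟨A, B⟩ -
    simp

section Counts

variable {S : Finset USPlayer} {x : USPlayer}

@[simp] theorem numSen_erase_of_ne_sen (hx : ∀ j, x ≠ sen j) : numSen (S.erase x) = numSen S := by
  rw [numSen, numSen, filter_erase, erase_eq_of_notMem (by simp [isSen_eq_false hx])]

@[simp] theorem numSen_insert_of_ne_sen (hx : ∀ j, x ≠ sen j) :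
    numSen (insert x S) = numSen S := by
  rw [numSen, numSen, filter_insert, if_neg (by simp [isSen_eq_false hx])]

@[simp] theorem numRep_erase_of_ne_rep (hx : ∀ j, x ≠ rep j) : numRep (S.erase x) = numRep S := by
  rw [numRep, numRep, filter_erase, erase_eq_of_notMem (by simp [isRep_eq_false hx])]

@[simp] theorem numRep_insert_of_ne_rep (hx : ∀ j, x ≠ rep j) :
    numRep (insert x S) = numRep S := by
  rw [numRep, numRep, filter_insert, if_neg (by simp [isRep_eq_false hx])]

@[simp] theorem numSen_insert_sen {j : Fin 100} (h : sen j ∉ S) :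
    numSen (insert (sen j) S) = numSen S + 1 := by
  rw [numSen, numSen, filter_insert, if_pos (by rfl), card_insert_of_notMem (by simp [h])]

theorem numSen_erase_sen {j : Fin 100} (h : sen j ∈ S) :
    numSen (S.erase (sen j)) + 1 = numSen S := by
  rw [numSen, numSen, filter_erase, card_erase_add_one (mem_filter.2 ⟨h, by rfl⟩)]

theorem numRep_erase_rep {j : Fin 435} (h : rep j ∈ S) :
    numRep (S.erase (rep j)) + 1 = numRep S := by
  rw [numRep, numRep, filter_erase, card_erase_add_one (mem_filter.2 ⟨h, by rfl⟩)]

@[simp] theorem numSen_coalition {p v A B} : numSen (coalition p v A B) = #A := by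
  rw [← card_senSet, senSet_coalition]

@[simp] theorem numRep_coalition {p v A B} : numRep (coalition p v A B) = #B := by
  rw [← card_repSet, repSet_coalition]

end Counts

theorem pres_atLeastAsDesirable_sen (s : Fin 100) : AtLeastAsDesirable usWinning pres (sen s) := by
  intro T hp hs hW
  simp only [usWinning, mem_insert, numSen_insert_sen hs, numSen_insert_of_ne_sen,
    numRep_insert_of_ne_rep, ne_eq, reduceCtorEq, not_false_eq_true, implies_true, hp, or_false,
    false_or, false_and, true_and] at hW ⊢
  grind

theorem sen_atLeastAsDesirable_vp (s : Fin 100) : AtLeastAsDesirable usWinning (sen s) vp := by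
  intro T hs hv hW
  simp only [usWinning, mem_insert, numSen_insert_sen hs, numSen_insert_of_ne_sen,
    numRep_insert_of_ne_rep, ne_eq, reduceCtorEq, not_false_eq_true, implies_true, false_or,
    true_or, true_and] at hW ⊢
  grind

instance : DecidablePred usWinning := fun _ => inferInstanceAs (Decidable (_ ∨ _))

theorem usCrit_eq_critCount : usCrit = critCount usWinning := rfl

theorem vp_critical_of_numSen_eq {S : Finset USPlayer} (hp : pres ∈ S) (hv : vp ∈ S) (h50 : numSen S = 50)
    (h218 : 218 ≤ numRep S) : vp ∈ S ∧ usWinning S ∧ ¬ usWinning (S.erase vp) := by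
  refine ⟨hv, Or.inl ⟨hp, h218, Or.inr ⟨hv, h50.ge⟩⟩, ?_⟩
  simp [usWinning, h50]

theorem rep_critical_cases {S : Finset USPlayer} {r : Fin 435}
    (h : rep r ∈ S ∧ usWinning S ∧ ¬ usWinning (S.erase (rep r))) :
    (pres ∈ S ∧ numRep S = 218 ∧ (51 ≤ numSen S ∨ vp ∈ S ∧ 50 ≤ numSen S)) ∨
      (pres ∉ S ∧ numRep S = 290 ∧ 67 ≤ numSen S) := by
  obtain ⟨hr, hW, hL⟩ := h
  have := numRep_erase_rep hr
  simp only [usWinning, mem_erase, numSen_erase_of_ne_sen, ne_eq, reduceCtorEq,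
    not_false_eq_true, implies_true, true_and] at hW hL
  grind

def vpCritLowerBound (k : ℕ) : ℕ :=
  Nat.choose 100 50 * if 218 ≤ k - 52 then Nat.choose 435 (k - 52) else 0

theorem vpCritLowerBound_le_usCrit (k : ℕ) : vpCritLowerBound k ≤ usCrit vp k := by
  have hsub : profileSet true true {A | #A = 50} {B | #B = k - 52 ∧ 218 ≤ #B} ⊆
      ({S | #S = k ∧ vp ∈ S ∧ usWinning S ∧ ¬ usWinning (S.erase vp)} : Finset _) := by
    intro S hS
    simp only [profileSet, mem_filter, mem_univ, true_and, iff_true, card_senSet,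
      card_repSet] at hS
    obtain ⟨hp, hv, hA, hB, h218⟩ := hS
    have hcard := card_eq_numSen_add_numRep S
    simp only [hp, hv, if_true] at hcard
    exact mem_filter.2 ⟨mem_univ _, by omega, vp_critical_of_numSen_eq hp hv hA h218⟩
  calc vpCritLowerBound k
        = #(profileSet true true {A | #A = 50} {B | #B = k - 52 ∧ 218 ≤ #B}) := by
        simp [card_profileSet, card_filter_card_eq_and_le, vpCritLowerBound]
    _ ≤ usCrit vp k := by
        rw [usCrit_eq_critCount, critCount_eq_card]
        exact card_le_card hsub

-- One term for each of the classes (P, ¬V), (P, V), (¬P, ¬V), (¬P, V) of `rep_critical_cases`;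
-- the guards also discard the truncated values `k - c = 0` for small `k`.
def repCritUpperBound (k : ℕ) : ℕ :=
  (if 51 ≤ k - 219 then Nat.choose 100 (k - 219) else 0) * Nat.choose 434 217 +
    (if 50 ≤ k - 220 then Nat.choose 100 (k - 220) else 0) * Nat.choose 434 217 +
    (if 67 ≤ k - 290 then Nat.choose 100 (k - 290) else 0) * Nat.choose 434 289 +
    (if 67 ≤ k - 291 then Nat.choose 100 (k - 291) else 0) * Nat.choose 434 289

theorem usCrit_le_repCritUpperBound (r : Fin 435) (k : ℕ) :
    usCrit (rep r) k ≤ repCritUpperBound k := by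
  let 𝒜 (c m : ℕ) : Finset (Finset (Fin 100)) := {A | #A = k - c ∧ m ≤ #A}
  let ℬ (b : ℕ) : Finset (Finset (Fin 435)) := {B | #B = b + 1 ∧ r ∈ B}
  let X₁ := profileSet true false (𝒜 219 51) (ℬ 217)
  let X₂ := profileSet true true (𝒜 220 50) (ℬ 217)
  let X₃ := profileSet false false (𝒜 290 67) (ℬ 289)
  let X₄ := profileSet false true (𝒜 291 67) (ℬ 289)
  have hsub : ({S | #S = k ∧ rep r ∈ S ∧ usWinning S ∧ ¬ usWinning (S.erase (rep r))} : Finset _)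
      ⊆ X₁ ∪ X₂ ∪ X₃ ∪ X₄ := by
    intro S hS
    obtain ⟨-, hk, hcrit⟩ := mem_filter.1 hS
    have hcard := card_eq_numSen_add_numRep S
    simp only [X₁, X₂, X₃, X₄, profileSet, 𝒜, ℬ, mem_union, mem_filter, mem_univ, true_and,
      card_senSet, card_repSet, mem_repSet, hcrit.1, and_true]
    rcases rep_critical_cases hcrit with ⟨hp, h218, hsen⟩ | ⟨hp, h290, h67⟩ <;>
      by_cases hv : vp ∈ S <;> simp only [hp, hv, if_true, if_false] at hcard ⊢ <;> grind
  calc usCrit (rep r) k ≤ #(X₁ ∪ X₂ ∪ X₃ ∪ X₄) := by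
        rw [usCrit_eq_critCount, critCount_eq_card]
        exact card_le_card hsub
    _ ≤ #X₁ + #X₂ + #X₃ + #X₄ := by
        have := card_union_le (X₁ ∪ X₂ ∪ X₃) X₄
        have := card_union_le (X₁ ∪ X₂) X₃
        have := card_union_le X₁ X₂
        omega
    _ = repCritUpperBound k := by
        simp only [X₁, X₂, X₃, X₄, card_profileSet, 𝒜, ℬ, card_filter_card_eq_and_le,
          card_filter_card_eq_and_mem, Fintype.card_fin, repCritUpperBound]

theorem usCrit_sen_lt_usCrit_pres (s : Fin 100) : usCrit (sen s) 270 < usCrit pres 270 := by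
  obtain ⟨A, hAs, hA⟩ := exists_subset_card_eq (show 51 ≤ #(univ.erase s) by simp)
  obtain ⟨B, -, hB⟩ := exists_subset_card_eq (show 218 ≤ #(univ : Finset (Fin 435)) by simp)
  have hs : s ∉ A := fun h => by simpa using hAs h
  have hT : #(coalition true false A B) = 270 := by
    rw [card_eq_numSen_add_numRep]
    simp [hA, hB]
  rw [usCrit_eq_critCount, ← hT]
  exact (pres_atLeastAsDesirable_sen s).critCount_lt
    ⟨by simp, by simp [usWinning, hA, hB], by simp [usWinning, hA]⟩ (by simpa using hs)
    (by simp [usWinning, hA, hs])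

theorem usCrit_vp_lt_usCrit_sen (s : Fin 100) : usCrit vp 357 < usCrit (sen s) 357 := by
  obtain ⟨A, hAs, hA⟩ := exists_subset_card_eq (show 66 ≤ #(univ.erase s) by simp)
  obtain ⟨B, -, hB⟩ := exists_subset_card_eq (show 290 ≤ #(univ : Finset (Fin 435)) by simp)
  have hs : s ∉ A := fun h => by simpa using hAs h
  have hT : #(coalition false false (insert s A) B) = 357 := by
    rw [card_eq_numSen_add_numRep]
    simp [hA, hB, hs]
  have herase := numSen_erase_sen (S := coalition false false (insert s A) B) (j := s) (by simp)
  rw [numSen_coalition, card_insert_of_notMem hs, hA, Nat.add_right_cancel_iff] at herase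
  rw [usCrit_eq_critCount, ← hT]
  refine (sen_atLeastAsDesirable_vp s).critCount_lt
    ⟨by simp, by simp [usWinning, hA, hB, hs], ?_⟩ (by simp) ?_
  all_goals simp [usWinning, herase]

-- `Nat.choose` is rewritten through factorials so that the kernel evaluates it by
-- multiplication instead of unfolding Pascal's recursion.
set_option maxRecDepth 10000 in
theorem sum_repCritUpperBound_lt :
    ∑ k ∈ Icc 1 537, repCritUpperBound k < ∑ k ∈ Icc 1 537, vpCritLowerBound k := by
  simp only [repCritUpperBound, vpCritLowerBound, Nat.choose_eq_descFactorial_div_factorial]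
  decide

set_option maxRecDepth 10000 in
theorem sum_shapley_repCritUpperBound_lt :
    ∑ k ∈ Icc 1 537, (k - 1)! * (536 - (k - 1))! * repCritUpperBound k <
      ∑ k ∈ Icc 1 537, (k - 1)! * (536 - (k - 1))! * vpCritLowerBound k := by
  simp only [repCritUpperBound, vpCritLowerBound, Nat.choose_eq_descFactorial_div_factorial]
  decide

theorem weighted_usCrit_rep_lt_vp (w : ℕ → ℕ) (r : Fin 435)
    (h : ∑ k ∈ Icc 1 537, w k * repCritUpperBound k < ∑ k ∈ Icc 1 537, w k * vpCritLowerBound k) :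
    ∑ k ∈ Icc 1 537, w k * usCrit (rep r) k < ∑ k ∈ Icc 1 537, w k * usCrit vp k :=
  calc _ ≤ _ := sum_le_sum fun k _ => Nat.mul_le_mul_left _ (usCrit_le_repCritUpperBound r k)
    _ < _ := h
    _ ≤ _ := sum_le_sum fun k _ => Nat.mul_le_mul_left _ (vpCritLowerBound_le_usCrit k)

theorem one_div_succ_mul_choose (n j : ℕ) (hj : j ≤ n) :
    1 / ((n + 1) * (n.choose j : ℝ)) = 1 / (n + 1)! * (j ! * (n - j)! : ℕ) := by
  have h := Nat.choose_mul_factorial_mul_factorial hj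
  rw [Nat.factorial_succ, ← h]
  have : (0 : ℝ) < n.choose j := by exact_mod_cast Nat.choose_pos hj
  push_cast
  field_simp

section Power

variable {lam : ℕ → ℝ} {i j : USPlayer}

theorem usPower_lt_of_usCrit_le (hpos : ∀ k ∈ Icc 1 537, 0 < lam k)
    (hle : ∀ k, usCrit j k ≤ usCrit i k) {k₀ : ℕ} (hk₀ : k₀ ∈ Icc 1 537)
    (hlt : usCrit j k₀ < usCrit i k₀) : usPower lam j < usPower lam i :=
  sum_lt_sum (fun k hk => mul_le_mul_of_nonneg_left (by exact_mod_cast hle k) (hpos k hk).le)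
    ⟨k₀, hk₀, mul_lt_mul_of_pos_left (by exact_mod_cast hlt) (hpos k₀ hk₀)⟩

theorem usPower_lt_of_weighted_sum_lt (w : ℕ → ℕ) {c : ℝ} (hc : 0 < c)
    (hlam : ∀ k ∈ Icc 1 537, lam k = c * w k)
    (h : ∑ k ∈ Icc 1 537, w k * usCrit j k < ∑ k ∈ Icc 1 537, w k * usCrit i k) :
    usPower lam j < usPower lam i := by
  have hpow : ∀ i, usPower lam i = c * ∑ k ∈ Icc 1 537, (w k : ℝ) * usCrit i k := fun i => by
    rw [usPower, mul_sum]
    exact sum_congr rfl fun k hk => by rw [hlam k hk, mul_assoc]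
  rw [hpow, hpow]
  exact mul_lt_mul_of_pos_left (by exact_mod_cast h) hc

end Power

/-- Theorem 3 (b) of the paper: under the Banzhaf index (`lam k = 1/2^536`) or the
Shapley–Shubik index (`lam k = 1/(537 * C(536, k-1))`), the ranking is
president > senator > vice president > representative. -/
theorem us_banzhaf_shapley_ranking (lam : ℕ → ℝ)
    (hlam : (∀ k, lam k = 1 / 2 ^ 536) ∨
            (∀ k, lam k = 1 / (537 * (Nat.choose 536 (k - 1) : ℝ))))
    (s : Fin 100) (r : Fin 435) :
    usPower lam USPlayer.pres > usPower lam (USPlayer.sen s) ∧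
    usPower lam (USPlayer.sen s) > usPower lam USPlayer.vp ∧
    usPower lam USPlayer.vp > usPower lam (USPlayer.rep r) := by
  obtain ⟨w, c, hc, hw, hlamw, hnum⟩ : ∃ (w : ℕ → ℕ) (c : ℝ), 0 < c ∧ (∀ k, 0 < w k) ∧
      (∀ k ∈ Icc 1 537, lam k = c * w k) ∧
      ∑ k ∈ Icc 1 537, w k * repCritUpperBound k < ∑ k ∈ Icc 1 537, w k * vpCritLowerBound k := by
    rcases hlam with hB | hS
    · refine ⟨fun _ => 1, 1 / 2 ^ 536, by positivity, fun _ => one_pos, fun k _ => by simp [hB],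
        by simpa using sum_repCritUpperBound_lt⟩
    · refine ⟨fun k => (k - 1)! * (536 - (k - 1))!, 1 / 537!, by positivity,
        fun k => by positivity, fun k hk => ?_, sum_shapley_repCritUpperBound_lt⟩
      rw [hS, ← one_div_succ_mul_choose 536 (k - 1) (by rw [mem_Icc] at hk; omega)]
      norm_num
  have hpos : ∀ k ∈ Icc 1 537, 0 < lam k := fun k hk => by
    rw [hlamw k hk]
    exact mul_pos hc (by exact_mod_cast hw k)
  exact ⟨usPower_lt_of_usCrit_le hpos (pres_atLeastAsDesirable_sen s).critCount_le
      (by simp) (usCrit_sen_lt_usCrit_pres s),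
    usPower_lt_of_usCrit_le hpos (sen_atLeastAsDesirable_vp s).critCount_le
      (by simp) (usCrit_vp_lt_usCrit_sen s),
    usPower_lt_of_weighted_sum_lt w hc hlamw (weighted_usCrit_rep_lt_vp w r hnum)⟩
end
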